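/- arXiv:math/0607419 — 3 statements merged into one kernel-verified Lean document; each statement's English description precedes it below -/
import Mathlib

section
/- Let p be a prime, a ≠ b two distinct letters, and α, β positive integers. The element a^α − b^β of (ℤ/pℤ)⟨A⟩ is primitive for the unshuffle coproduct if and only if α and β are both powers of p. -/
/-!
Sending the letter `a` to `X` in the left tensor factor and to `1` in the right one (and every
other letter to `0`) turns primitivity of `a^α - b^β` into `(X + 1)^α = X^α + 1` in `𝔽_p[X]`.
Writing `α = p^k m` with `p ∤ m`, Frobenius turns this into the same identity for `m` after
`X ↦ X^(p^k)`; comparing coefficients of `X` gives `m = 0` in `𝔽_p`, unless `m = 1`.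
Conversely letters are primitive, and in characteristic `p` so are `p`-th powers of primitives.
-/

open TensorProduct

/-- The unshuffle coproduct on the monoid algebra of the free monoid (= `K⟨A⟩`):
the unique algebra morphism (for the concatenation product) sending each letter `a`
to `a ⊗ 1 + 1 ⊗ a`. -/
noncomputable def unshuffle (K A : Type*) [CommSemiring K] :
    MonoidAlgebra K (FreeMonoid A) →ₐ[K]
      MonoidAlgebra K (FreeMonoid A) ⊗[K] MonoidAlgebra K (FreeMonoid A) :=
  MonoidAlgebra.lift K _ (FreeMonoid A)
    (FreeMonoid.lift fun a =>
      (MonoidAlgebra.of K (FreeMonoid A) (FreeMonoid.of a)) ⊗ₜ[K] 1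
        + 1 ⊗ₜ[K] (MonoidAlgebra.of K (FreeMonoid A) (FreeMonoid.of a)))

/-- The word `l` viewed as an element of `K⟨A⟩`. -/
noncomputable def wd {K : Type*} {A : Type*} [CommSemiring K] (l : List A) :
    MonoidAlgebra K (FreeMonoid A) :=
  MonoidAlgebra.of K (FreeMonoid A) (FreeMonoid.ofList l)

/-- `P` is primitive for the unshuffle coproduct: `c(P) = P ⊗ 1 + 1 ⊗ P`. -/
def IsPrimitive {K A : Type*} [CommSemiring K] (P : MonoidAlgebra K (FreeMonoid A)) : Prop :=
  unshuffle K A P = P ⊗ₜ[K] 1 + 1 ⊗ₜ[K] P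

open scoped Polynomial

open Polynomial in
lemma natCast_eq_zero_of_X_add_one_pow_eq {K : Type*} [CommSemiring K] {m : ℕ} (hm : m ≠ 1)
    (h : (X + 1 : K[X]) ^ m = X ^ m + 1) : (m : K) = 0 := by
  simpa [coeff_X_add_one_pow, coeff_X_pow, coeff_one, Ne.symm hm] using congrArg (coeff · 1) h

open Polynomial in
lemma exists_eq_pow_of_X_add_one_pow_eq (K : Type*) [CommSemiring K] (p : ℕ) [hp : Fact p.Prime]
    [CharP K p] {n : ℕ} (hn : n ≠ 0) (h : (X + 1 : K[X]) ^ n = X ^ n + 1) : ∃ k, n = p ^ k := by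
  obtain ⟨k, m, hpm, rfl⟩ := Nat.exists_eq_pow_mul_and_not_dvd hn p hp.out.ne_one
  have hexp : expand K (p ^ k) ((X + 1) ^ m) = expand K (p ^ k) (X ^ m + 1) := by
    rw [pow_mul, add_pow_char_pow, one_pow, pow_mul] at h
    rwa [map_pow, map_add, map_add, map_pow, expand_X, map_one]
  have hm := expand_injective (pow_pos hp.out.pos k) hexp
  by_cases hm1 : m = 1
  · exact ⟨k, by rw [hm1, mul_one]⟩
  · exact absurd ((CharP.cast_eq_zero_iff K p m).1 (natCast_eq_zero_of_X_add_one_pow_eq hm1 hm)) hpm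

section Primitive

variable {K A : Type*}

lemma FreeMonoid.ofList_replicate (c : A) (n : ℕ) :
    FreeMonoid.ofList (List.replicate n c) = FreeMonoid.of c ^ n := by
  induction n with
  | zero => rfl
  | succ n ih => rw [pow_succ', ← ih, List.replicate_succ, FreeMonoid.ofList_cons]

lemma wd_replicate [CommSemiring K] (c : A) (n : ℕ) :
    wd (K := K) (List.replicate n c) = wd [c] ^ n := by
  rw [wd, wd, ← map_pow, FreeMonoid.ofList_singleton, FreeMonoid.ofList_replicate]

lemma isPrimitive_wd_singleton [CommSemiring K] (c : A) : IsPrimitive (wd (K := K) [c]) := by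
  rw [IsPrimitive, wd, FreeMonoid.ofList_singleton, unshuffle, MonoidAlgebra.lift_of,
    FreeMonoid.lift_eval_of]

lemma IsPrimitive.pow_prime_pow [CommSemiring K] (p : ℕ) [Fact p.Prime] [CharP K p]
    {P : MonoidAlgebra K (FreeMonoid A)} (hP : IsPrimitive P) (n : ℕ) :
    IsPrimitive (P ^ p ^ n) := by
  have hcomm : Commute (P ⊗ₜ[K] (1 : MonoidAlgebra K (FreeMonoid A))) (1 ⊗ₜ[K] P) := by
    rw [Commute, SemiconjBy, Algebra.TensorProduct.tmul_mul_tmul,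
      Algebra.TensorProduct.tmul_mul_tmul, mul_one, one_mul]
  have hp : (p : MonoidAlgebra K (FreeMonoid A) ⊗[K] MonoidAlgebra K (FreeMonoid A)) = 0 := by
    rw [← map_natCast (algebraMap K _), CharP.cast_eq_zero, map_zero]
  obtain ⟨r, hr⟩ := hcomm.exists_add_pow_prime_pow_eq (Fact.out : p.Prime) n
  rw [IsPrimitive, map_pow, hP, hr, hp, zero_mul, zero_mul, zero_mul, add_zero,
    Algebra.TensorProduct.tmul_pow, Algebra.TensorProduct.tmul_pow, one_pow]

variable [CommRing K] {P Q : MonoidAlgebra K (FreeMonoid A)}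

lemma IsPrimitive.neg (hP : IsPrimitive P) : IsPrimitive (-P) := by
  rw [IsPrimitive, map_neg, hP, neg_tmul, tmul_neg, neg_add]

lemma IsPrimitive.sub (hP : IsPrimitive P) (hQ : IsPrimitive Q) : IsPrimitive (P - Q) := by
  rw [IsPrimitive, map_sub, hP, hQ, sub_tmul, tmul_sub]
  abel

end Primitive

section Evaluation

variable {K A R : Type*} [CommSemiring K] [CommSemiring R] [Algebra K R]

noncomputable def evalLetters (f : A → R) : MonoidAlgebra K (FreeMonoid A) →ₐ[K] R :=
  MonoidAlgebra.lift K R (FreeMonoid A) (FreeMonoid.lift f)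

lemma evalLetters_wd_replicate (f : A → R) (c : A) (n : ℕ) :
    evalLetters (K := K) f (wd (List.replicate n c)) = f c ^ n := by
  rw [wd_replicate, map_pow, evalLetters, wd, FreeMonoid.ofList_singleton, MonoidAlgebra.lift_of,
    FreeMonoid.lift_eval_of]

lemma evalLetters_tensor_comp_unshuffle (f g : A → R) :
    (Algebra.TensorProduct.lift (evalLetters (K := K) f) (evalLetters g) fun _ _ => .all _ _).comp
      (unshuffle K A) = evalLetters (f + g) := by
  refine (MonoidAlgebra.lift K R (FreeMonoid A)).symm.injective (FreeMonoid.hom_eq fun c => ?_)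
  simp [evalLetters, unshuffle]

lemma IsPrimitive.evalLetters_add {P : MonoidAlgebra K (FreeMonoid A)} (hP : IsPrimitive P)
    (f g : A → R) : evalLetters (f + g) P = evalLetters f P + evalLetters g P := by
  rw [← evalLetters_tensor_comp_unshuffle, AlgHom.comp_apply, hP, map_add,
    Algebra.TensorProduct.lift_tmul, Algebra.TensorProduct.lift_tmul, map_one, map_one, mul_one,
    one_mul]

end Evaluation

open Polynomial (X) in
lemma IsPrimitive.X_add_one_pow_eq {K A : Type*} [CommRing K] {a b : A} (hab : a ≠ b)
    {α β : ℕ} (hβ : β ≠ 0)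
    (h : IsPrimitive (wd (K := K) (List.replicate α a) - wd (List.replicate β b))) :
    (X + 1 : K[X]) ^ α = X ^ α + 1 := by
  classical
  have := h.evalLetters_add (Pi.single a (X : K[X])) (Pi.single a 1)
  simpa [evalLetters_wd_replicate, hab.symm, zero_pow hβ, ← Pi.single_add] using this

/-- over `ℤ/pℤ`, for distinct letters `a ≠ b` and `α, β ≥ 1`,
`a^α − b^β` is primitive iff `α` and `β` are powers of `p`. -/
theorem primitive_diff_powers_iff {A : Type*} (p : ℕ) (hp : p.Prime)
    (a b : A) (hab : a ≠ b) (α β : ℕ) (hα : 0 < α) (hβ : 0 < β) :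
    IsPrimitive (wd (K := ZMod p) (List.replicate α a) - wd (List.replicate β b)) ↔
      (∃ m : ℕ, α = p ^ m) ∧ (∃ n : ℕ, β = p ^ n) := by
  have : Fact p.Prime := ⟨hp⟩
  constructor
  · intro h
    have hswap := h.neg
    rw [neg_sub] at hswap
    exact ⟨exists_eq_pow_of_X_add_one_pow_eq (ZMod p) p hα.ne' (h.X_add_one_pow_eq hab hβ.ne'),
      exists_eq_pow_of_X_add_one_pow_eq (ZMod p) p hβ.ne' (hswap.X_add_one_pow_eq hab.symm hα.ne')⟩
  · rintro ⟨⟨m, rfl⟩, ⟨n, rfl⟩⟩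
    rw [wd_replicate, wd_replicate]
    exact ((isPrimitive_wd_singleton a).pow_prime_pow p m).sub
      ((isPrimitive_wd_singleton b).pow_prime_pow p n)
end

section
/- Let ≡_θ be the partially commutative congruence on A* generated by relations ab = ba for (a,b) ∈ θ, where θ is a symmetric irreflexive relation on A. Then the unshuffle coproduct c on K⟨A⟩ descends to the quotient: if u ≡_θ u′ and v ≡_θ v′ then c(u) and c(u′) are congruent modulo the ideal generated by {w ⊗ x − w′ ⊗ x′ : w ≡_θ w′, x ≡_θ x′}; equivalently, the shuffle product of two ≡_θ-class sums is a sum of ≡_θ-classes (with multiplicities). -/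
open TensorProduct

/-- The natural algebra morphism `K⟨A⟩ → K[A*/≡]` induced by a monoid congruence. -/
noncomputable def natHom (K : Type*) {A : Type*} [CommSemiring K] (c : Con (FreeMonoid A)) :
    MonoidAlgebra K (FreeMonoid A) →ₐ[K] MonoidAlgebra K c.Quotient :=
  MonoidAlgebra.mapDomainAlgHom K K c.mk'

/-
The coproduct `c` is an algebra morphism sending each letter `a` to the primitive element
`a ⊗ 1 + 1 ⊗ a`, and `x ⊗ 1 + 1 ⊗ x` commutes with `y ⊗ 1 + 1 ⊗ y` as soon as `x` commutes
with `y`. So when `ab ≡ ba`, the images of `c(a)` and `c(b)` in the quotient commute, i.e.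
`(nat ⊗ nat)(c(ab)) = (nat ⊗ nat)(c(ba))`. The kernel of the monoid morphism
`w ↦ (nat ⊗ nat)(c w)` is thus a congruence containing the generators of `≡_θ`.
-/
theorem Commute.tmul_one_add_one_tmul {K B : Type*} [CommSemiring K] [Semiring B] [Algebra K B]
    {x y : B} (h : Commute x y) :
    Commute (x ⊗ₜ[K] (1 : B) + 1 ⊗ₜ x) (y ⊗ₜ[K] (1 : B) + 1 ⊗ₜ y) := by
  refine .add_left (.add_right ?_ ?_) (.add_right ?_ ?_)
  · exact h.tmul (.refl 1)
  · exact (Commute.one_right x).tmul (.one_left y)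
  · exact (Commute.one_left y).tmul (.one_right x)
  · exact (Commute.refl 1).tmul h

section

variable {K A : Type*} [CommSemiring K]

theorem isPrimitive_of_of (a : A) :
    IsPrimitive (MonoidAlgebra.of K (FreeMonoid A) (FreeMonoid.of a)) := by
  simp [IsPrimitive, unshuffle]

theorem IsPrimitive.commute_map_unshuffle {B : Type*} [Semiring B] [Algebra K B]
    {P Q : MonoidAlgebra K (FreeMonoid A)} (hP : IsPrimitive P) (hQ : IsPrimitive Q)
    (f : MonoidAlgebra K (FreeMonoid A) →ₐ[K] B) (h : Commute (f P) (f Q)) :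
    Commute (Algebra.TensorProduct.map f f (unshuffle K A P))
      (Algebra.TensorProduct.map f f (unshuffle K A Q)) := by
  rw [hP, hQ]
  simp only [map_add, Algebra.TensorProduct.map_tmul, map_one]
  exact h.tmul_one_add_one_tmul

theorem natHom_of (c : Con (FreeMonoid A)) (w : FreeMonoid A) :
    natHom K c (MonoidAlgebra.of K _ w) = MonoidAlgebra.of K _ (c.mk' w) := by
  simp [natHom]

theorem map_unshuffle_of_mul_comm {B : Type*} [Semiring B] [Algebra K B]
    (f : MonoidAlgebra K (FreeMonoid A) →ₐ[K] B) {a b : A}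
    (h : Commute (f (MonoidAlgebra.of K _ (FreeMonoid.of a)))
      (f (MonoidAlgebra.of K _ (FreeMonoid.of b)))) :
    Algebra.TensorProduct.map f f
        (unshuffle K A (MonoidAlgebra.of K _ (FreeMonoid.of a * FreeMonoid.of b))) =
      Algebra.TensorProduct.map f f
        (unshuffle K A (MonoidAlgebra.of K _ (FreeMonoid.of b * FreeMonoid.of a))) := by
  simp only [map_mul]
  exact ((isPrimitive_of_of a).commute_map_unshuffle (isPrimitive_of_of b) f h).eq

end

theorem partially_commutative_shuffle_compatible_general {K A : Type*} [CommSemiring K]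
    (θ : A → A → Prop)
    (u v : FreeMonoid A)
    (huv : conGen (fun x y : FreeMonoid A => ∃ a b, θ a b ∧
        x = FreeMonoid.of a * FreeMonoid.of b ∧ y = FreeMonoid.of b * FreeMonoid.of a) u v) :
    (Algebra.TensorProduct.map
        (natHom K (conGen (fun x y : FreeMonoid A => ∃ a b, θ a b ∧
          x = FreeMonoid.of a * FreeMonoid.of b ∧ y = FreeMonoid.of b * FreeMonoid.of a)))
        (natHom K (conGen (fun x y : FreeMonoid A => ∃ a b, θ a b ∧
          x = FreeMonoid.of a * FreeMonoid.of b ∧ y = FreeMonoid.of b * FreeMonoid.of a))))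
      (unshuffle K A (MonoidAlgebra.of K (FreeMonoid A) u))
    = (Algebra.TensorProduct.map
        (natHom K (conGen (fun x y : FreeMonoid A => ∃ a b, θ a b ∧
          x = FreeMonoid.of a * FreeMonoid.of b ∧ y = FreeMonoid.of b * FreeMonoid.of a)))
        (natHom K (conGen (fun x y : FreeMonoid A => ∃ a b, θ a b ∧
          x = FreeMonoid.of a * FreeMonoid.of b ∧ y = FreeMonoid.of b * FreeMonoid.of a))))
      (unshuffle K A (MonoidAlgebra.of K (FreeMonoid A) v)) := by
  set c := conGen fun x y : FreeMonoid A => ∃ a b, θ a b ∧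
    x = FreeMonoid.of a * FreeMonoid.of b ∧ y = FreeMonoid.of b * FreeMonoid.of a
  let φ : FreeMonoid A →* _ :=
    ((Algebra.TensorProduct.map (natHom K c) (natHom K c)).comp (unshuffle K A)).toMonoidHom.comp
      (MonoidAlgebra.of K _)
  suffices c ≤ Con.ker φ from (Con.ker_rel φ).1 (this huv)
  refine Con.conGen_le.2 ?_
  rintro _ _ ⟨a, b, hab, rfl, rfl⟩
  have hc : c (FreeMonoid.of a * FreeMonoid.of b) (FreeMonoid.of b * FreeMonoid.of a) :=
    ConGen.Rel.of _ _ ⟨a, b, hab, rfl, rfl⟩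
  refine (Con.ker_rel φ).2 (map_unshuffle_of_mul_comm _ ?_)
  simp only [natHom_of, Commute, SemiconjBy, ← map_mul]
  exact congrArg _ ((Con.eq c).2 hc)

/-- for a symmetric irreflexive `θ ⊆ A × A`, the unshuffle coproduct descends
to the quotient by the partially commutative congruence generated by `{ab = ba : (a,b) ∈ θ}`:
if `u ≡_θ v` then `(nat ⊗ nat)(c u) = (nat ⊗ nat)(c v)`. -/
theorem partially_commutative_shuffle_compatible {K A : Type*} [CommSemiring K]
    (θ : A → A → Prop) (hsymm : ∀ a b, θ a b → θ b a) (hirr : ∀ a, ¬ θ a a)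
    (u v : FreeMonoid A)
    (huv : conGen (fun x y : FreeMonoid A => ∃ a b, θ a b ∧
        x = FreeMonoid.of a * FreeMonoid.of b ∧ y = FreeMonoid.of b * FreeMonoid.of a) u v) :
    (Algebra.TensorProduct.map
        (natHom K (conGen (fun x y : FreeMonoid A => ∃ a b, θ a b ∧
          x = FreeMonoid.of a * FreeMonoid.of b ∧ y = FreeMonoid.of b * FreeMonoid.of a)))
        (natHom K (conGen (fun x y : FreeMonoid A => ∃ a b, θ a b ∧
          x = FreeMonoid.of a * FreeMonoid.of b ∧ y = FreeMonoid.of b * FreeMonoid.of a))))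
      (unshuffle K A (MonoidAlgebra.of K (FreeMonoid A) u))
    = (Algebra.TensorProduct.map
        (natHom K (conGen (fun x y : FreeMonoid A => ∃ a b, θ a b ∧
          x = FreeMonoid.of a * FreeMonoid.of b ∧ y = FreeMonoid.of b * FreeMonoid.of a)))
        (natHom K (conGen (fun x y : FreeMonoid A => ∃ a b, θ a b ∧
          x = FreeMonoid.of a * FreeMonoid.of b ∧ y = FreeMonoid.of b * FreeMonoid.of a))))
      (unshuffle K A (MonoidAlgebra.of K (FreeMonoid A) v)) :=
  partially_commutative_shuffle_compatible_general θ u v huv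
end

section
/- Let ≡₁ and ≡₂ be two congruences on A* that are K-shuffle compatible (over a commutative semiring K). Then their join ≡₁ ∨ ≡₂ (the smallest congruence containing both) is also K-shuffle compatible. -/
open TensorProduct

/-- A congruence `≡` on `A*` is `K`-shuffle compatible if the unshuffle coproduct descends
to the quotient, i.e. `u ≡ v` implies `(nat ⊗ nat)(c u) = (nat ⊗ nat)(c v)`. -/
def ShuffleCompat (K : Type*) {A : Type*} [CommSemiring K] (c : Con (FreeMonoid A)) : Prop :=
  ∀ u v : FreeMonoid A, c u v →
    (Algebra.TensorProduct.map (natHom K c) (natHom K c))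
        (unshuffle K A (MonoidAlgebra.of K (FreeMonoid A) u))
      = (Algebra.TensorProduct.map (natHom K c) (natHom K c))
        (unshuffle K A (MonoidAlgebra.of K (FreeMonoid A) v))

/-!
`≡` is shuffle compatible exactly when it lies below the kernel congruence of the monoid
morphism `w ↦ (nat ⊗ nat)(c w)`. For `≡ ≤ ≡'` the morphism for `≡'` factors through the one
for `≡`, so kernels grow with the congruence: `≡₁` and `≡₂` both lie below the kernel for
`≡₁ ∨ ≡₂`, and hence so does their join.
-/

section

variable {K A : Type*} [CommSemiring K] {c d : Con (FreeMonoid A)}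

variable (K) in
noncomputable def coproductHom (c : Con (FreeMonoid A)) :
    FreeMonoid A →* MonoidAlgebra K c.Quotient ⊗[K] MonoidAlgebra K c.Quotient :=
  ((Algebra.TensorProduct.map (natHom K c) (natHom K c)).comp (unshuffle K A)).toMonoidHom.comp
    (MonoidAlgebra.of K (FreeMonoid A))

theorem shuffleCompat_iff_le_ker : ShuffleCompat K c ↔ c ≤ Con.ker (coproductHom K c) :=
  Iff.rfl

theorem natHom_eq_mapDomainAlgHom_comp (h : c ≤ d) :
    natHom K d = (MonoidAlgebra.mapDomainAlgHom K K (c.map d h)).comp (natHom K c) := by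
  rw [natHom, natHom, ← MonoidAlgebra.mapDomainAlgHom_comp]
  rfl

theorem coproductHom_eq_comp (h : c ≤ d) :
    coproductHom K d =
      (Algebra.TensorProduct.map (MonoidAlgebra.mapDomainAlgHom K K (c.map d h))
        (MonoidAlgebra.mapDomainAlgHom K K (c.map d h))).toMonoidHom.comp (coproductHom K c) := by
  rw [coproductHom, coproductHom, natHom_eq_mapDomainAlgHom_comp h, Algebra.TensorProduct.map_comp]
  rfl

theorem ker_coproductHom_mono (h : c ≤ d) :
    Con.ker (coproductHom K c) ≤ Con.ker (coproductHom K d) := fun u v huv => by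
  rw [Con.ker_apply, coproductHom_eq_comp h, MonoidHom.comp_apply, MonoidHom.comp_apply,
    Con.ker_apply.1 huv]

theorem ShuffleCompat.le_ker_coproductHom (hc : ShuffleCompat K c) (h : c ≤ d) :
    c ≤ Con.ker (coproductHom K d) :=
  (shuffleCompat_iff_le_ker.1 hc).trans (ker_coproductHom_mono h)

end

/-- the join of two `K`-shuffle compatible congruences on `A*` is again
`K`-shuffle compatible. -/
theorem shuffleCompat_sup {K A : Type*} [CommSemiring K] (c₁ c₂ : Con (FreeMonoid A))
    (h₁ : ShuffleCompat K c₁) (h₂ : ShuffleCompat K c₂) :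
    ShuffleCompat K (c₁ ⊔ c₂) :=
  shuffleCompat_iff_le_ker.2 <|
    sup_le (h₁.le_ker_coproductHom le_sup_left) (h₂.le_ker_coproductHom le_sup_right)
end
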